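/- arXiv:2107.08965 — 3 statements merged into one kernel-verified Lean document; each statement's English description precedes it below -/
import Mathlib

section
/- In the hardness instance, if 20·e < 3·n, then in every allocation A there exists an agent i with v_i(A_i) ≤ 4. -/
/-
Five times a valuation is the integer `|A ∩ T| + 4|A|`, so `v_i(A_i) > 4` forces it to be at least
`21`. Summed over the `3n` agents this is at least `63n`, whereas the bundles are disjoint, so the
`T_i`-parts contribute at most `|V| = 4n` and the bundle sizes add up to `|G| = 14n + 5e`; the sum
is therefore at most `60n + 20e < 63n`.
-/

open Finset

variable {G : Type*}

def hardVal [DecidableEq G] (T : Finset G) (A : Finset G) : ℚ :=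
  ((A ∩ T).card : ℚ) + (4 / 5) * ((A \ T).card : ℚ)

def IsAllocation {N : Type*} [Fintype N] [Fintype G] [DecidableEq G]
    (A : N → Finset G) : Prop :=
  (Set.univ : Set N).PairwiseDisjoint A ∧ Finset.univ.biUnion A = (Finset.univ : Finset G)

section HardVal

variable [DecidableEq G]

theorem five_mul_hardVal (T A : Finset G) :
    5 * hardVal T A = (((A ∩ T).card + 4 * A.card : ℕ) : ℚ) := by
  rw [hardVal, ← card_inter_add_card_sdiff A T]
  push_cast
  ring

theorem hardVal_le_four_iff (T A : Finset G) :
    hardVal T A ≤ 4 ↔ (A ∩ T).card + 4 * A.card ≤ 20 := by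
  rw [← Nat.cast_le (α := ℚ), ← five_mul_hardVal, Nat.cast_ofNat]
  constructor <;> intro h <;> linarith

end HardVal

namespace IsAllocation

variable {N : Type*} [Fintype N] [Fintype G] [DecidableEq G] {A : N → Finset G}

theorem sum_card (hA : IsAllocation A) : ∑ i, (A i).card = Fintype.card G := by
  rw [← card_biUnion (by simpa using hA.1), hA.2, card_univ]

theorem sum_card_inter_le {T : N → Finset G} {V : Finset G} (hA : IsAllocation A)
    (hTV : ∀ i, T i ⊆ V) : ∑ i, (A i ∩ T i).card ≤ V.card := by
  have hdisj : (Set.univ : Set N).PairwiseDisjoint fun i => A i ∩ T i :=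
    hA.1.mono fun _ => inter_subset_left
  rw [← card_biUnion (by simpa using hdisj)]
  exact card_le_card (biUnion_subset.2 fun i _ => inter_subset_right.trans (hTV i))

end IsAllocation

theorem stmt15_general [Fintype G] [DecidableEq G] (n e : ℕ)
    (V D : Finset G) (hVD : Disjoint V D) (hcover : V ∪ D = (Finset.univ : Finset G))
    (hV : V.card = 4 * n) (hD : D.card = 5 * (2 * n + e))
    (T : Fin (3 * n) → Finset G) (hT : ∀ i, T i ⊆ V ∧ (T i).card = 4)
    (he : 20 * e < 3 * n)
    (A : Fin (3 * n) → Finset G) (hA : IsAllocation A) :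
    ∃ i : Fin (3 * n), hardVal (T i) (A i) ≤ 4 := by
  have hcardG : Fintype.card G = 14 * n + 5 * e := by
    rw [← card_univ, ← hcover, card_union_of_disjoint hVD, hV, hD]
    ring
  have hinter := hA.sum_card_inter_le fun i => (hT i).1
  have hsum : ∑ i, ((A i ∩ T i).card + 4 * (A i).card) < ∑ _i : Fin (3 * n), 21 := by
    rw [sum_add_distrib, ← mul_sum, hA.sum_card, hcardG, sum_const, card_univ, Fintype.card_fin]
    simp only [smul_eq_mul]
    omega
  obtain ⟨i, -, hi⟩ := exists_lt_of_sum_lt hsum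
  exact ⟨i, (hardVal_le_four_iff _ _).2 (by omega)⟩

/-- Lemma 5.3: in the hardness instance (with `20e < 3n`), every allocation has an
agent with valuation at most 4. -/
theorem stmt15 [Fintype G] [DecidableEq G] (n e : ℕ) (hn : 1 ≤ n)
    (V D : Finset G) (hVD : Disjoint V D) (hcover : V ∪ D = (Finset.univ : Finset G))
    (hV : V.card = 4 * n) (hD : D.card = 5 * (2 * n + e))
    (T : Fin (3 * n) → Finset G) (hT : ∀ i, T i ⊆ V ∧ (T i).card = 4)
    (he : 20 * e < 3 * n)
    (A : Fin (3 * n) → Finset G) (hA : IsAllocation A) :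
    ∃ i : Fin (3 * n), hardVal (T i) (A i) ≤ 4 :=
  stmt15_general n e V D hVD hcover hV hD T hT he A hA
end

section
/- In the hardness instance, if 20·e < 3·n and the allocation A maximizes the Nash product ∏_i v_i(A_i) over all allocations, then v_i(A_i) ≤ 24/5 for every agent i. -/
open Finset

variable {G : Type*}

/-! If some agent `i` had value above `24/5`, she would hold a good `g` outside
`T i`. There are `14n + 5e < 15n` goods, so some agent `j` holds at most four goods and has
value at most `4`. Handing `g` from `i` to `j` turns the factor `a * b` of the Nash product into
at least `(a - 4/5) * (b + 4/5)`, which is larger because `a - b > 4/5`; the other factors are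
positive, since there are enough goods to give every agent a nonempty bundle. -/

section Valuation

variable [DecidableEq G] (T : Finset G)

lemma hardVal_eq_sum (A : Finset G) :
    hardVal T A = ∑ x ∈ A, if x ∈ T then (1 : ℚ) else 4 / 5 := by
  rw [sum_ite, filter_mem_eq_inter, filter_notMem_eq_sdiff]
  simp [hardVal, mul_comm]

lemma hardVal_nonneg (A : Finset G) : 0 ≤ hardVal T A := by
  rw [hardVal_eq_sum]
  exact sum_nonneg fun x _ => by split_ifs <;> norm_num

lemma hardVal_pos {A : Finset G} (hA : A.Nonempty) : 0 < hardVal T A := by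
  rw [hardVal_eq_sum]
  exact sum_pos (fun x _ => by split_ifs <;> norm_num) hA

lemma hardVal_le_card (A : Finset G) : hardVal T A ≤ A.card := by
  rw [hardVal_eq_sum, card_eq_sum_ones, Nat.cast_sum]
  gcongr with x
  split_ifs <;> norm_num

lemma hardVal_insert {A : Finset G} {g : G} (hg : g ∉ A) :
    hardVal T (insert g A) = hardVal T A + if g ∈ T then 1 else 4 / 5 := by
  rw [hardVal_eq_sum, hardVal_eq_sum, sum_insert hg, add_comm]

lemma hardVal_add_le_hardVal_insert {A : Finset G} {g : G} (hg : g ∉ A) :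
    hardVal T A + 4 / 5 ≤ hardVal T (insert g A) := by
  rw [hardVal_insert T hg]
  split_ifs <;> norm_num

lemma hardVal_erase {A : Finset G} {g : G} (hgA : g ∈ A) (hgT : g ∉ T) :
    hardVal T (A.erase g) = hardVal T A - 4 / 5 := by
  have h := hardVal_insert T (notMem_erase g A)
  rw [insert_erase hgA, if_neg hgT] at h
  linarith

lemma sdiff_nonempty_of_card_lt_hardVal {A : Finset G} (h : (T.card : ℚ) < hardVal T A) :
    (A \ T).Nonempty := by
  by_contra hAT
  rw [not_nonempty_iff_eq_empty, sdiff_eq_empty_iff_subset] at hAT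
  have : hardVal T A ≤ T.card :=
    (hardVal_le_card T A).trans (by exact_mod_cast card_le_card hAT)
  linarith

end Valuation

section Allocation

variable {N : Type*} [Fintype N] [Fintype G] [DecidableEq G] {A : N → Finset G}

lemma isAllocation_iff_existsUnique : IsAllocation A ↔ ∀ x, ∃! k, x ∈ A k := by
  constructor
  · rintro ⟨hdisj, hcover⟩ x
    obtain ⟨k, -, hk⟩ := mem_biUnion.mp (hcover ▸ mem_univ x)
    refine ⟨k, hk, fun l hl => ?_⟩
    by_contra hlk
    exact disjoint_left.mp (hdisj (Set.mem_univ l) (Set.mem_univ k) hlk) hl hk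
  · intro h
    refine ⟨fun k _ l _ hkl => disjoint_left.mpr fun x hk hl => hkl ((h x).unique hk hl),
      eq_univ_of_forall fun x => ?_⟩
    obtain ⟨k, hk, -⟩ := h x
    exact mem_biUnion.mpr ⟨k, mem_univ k, hk⟩

lemma IsAllocation.disjoint (hA : IsAllocation A) {i j : N} (hij : i ≠ j) :
    Disjoint (A i) (A j) :=
  hA.1 (Set.mem_univ i) (Set.mem_univ j) hij

lemma IsAllocation.sum_card_s16 (hA : IsAllocation A) : ∑ k, (A k).card = Fintype.card G := by
  rw [← card_univ, ← hA.2, card_biUnion fun k _ l _ hkl => hA.disjoint hkl]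

lemma exists_isAllocation_forall_nonempty [Nonempty N]
    (h : Fintype.card N ≤ Fintype.card G) :
    ∃ A : N → Finset G, IsAllocation A ∧ ∀ k, (A k).Nonempty := by
  classical
  obtain ⟨f⟩ := Function.Embedding.nonempty_of_card_le h
  refine ⟨fun k => univ.filter (Function.invFun f · = k),
    isAllocation_iff_existsUnique.mpr fun x => ?_, fun k => ⟨f k, ?_⟩⟩
  · simp
  · simp [Function.leftInverse_invFun f.injective k]

end Allocation

section Move

variable {N : Type*} [DecidableEq N] [DecidableEq G] {A : N → Finset G}

def moveGood (A : N → Finset G) (g : G) (i j : N) : N → Finset G :=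
  Function.update (Function.update A i ((A i).erase g)) j (insert g (A j))

lemma moveGood_apply_left {g : G} {i j : N} (hij : i ≠ j) :
    moveGood A g i j i = (A i).erase g := by
  simp [moveGood, hij]

lemma moveGood_apply_right {g : G} {i j : N} : moveGood A g i j j = insert g (A j) := by
  simp [moveGood]

lemma moveGood_apply_of_ne {g : G} {i j k : N} (hki : k ≠ i) (hkj : k ≠ j) :
    moveGood A g i j k = A k := by
  simp [moveGood, hki, hkj]

variable [Fintype N] [Fintype G]

lemma isAllocation_moveGood (hA : IsAllocation A) {g : G} {i j : N} (hij : i ≠ j)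
    (hg : g ∈ A i) : IsAllocation (moveGood A g i j) := by
  rw [isAllocation_iff_existsUnique] at hA ⊢
  intro x
  by_cases hx : x = g
  · subst hx
    refine ⟨j, by simp [moveGood_apply_right], fun k (hk : x ∈ moveGood A x i j k) => ?_⟩
    by_contra hkj
    by_cases hki : k = i
    · subst hki
      simp [moveGood_apply_left hij] at hk
    · rw [moveGood_apply_of_ne hki hkj] at hk
      exact hki ((hA x).unique hk hg)
  · have hmem : ∀ k, x ∈ moveGood A g i j k ↔ x ∈ A k := by
      intro k
      by_cases hkj : k = j
      · subst hkj
        simp [moveGood_apply_right, hx]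
      by_cases hki : k = i
      · subst hki
        simp [moveGood_apply_left hij, hx]
      rw [moveGood_apply_of_ne hki hkj]
    simpa only [hmem] using hA x

lemma prod_eq_mul_mul_prod_compl_pair {M : Type*} [CommMonoid M] (f : N → M) {i j : N}
    (hij : i ≠ j) : ∏ k, f k = f i * f j * ∏ k ∈ {i, j}ᶜ, f k := by
  rw [← prod_pair hij, prod_mul_prod_compl]

end Move

section NashOptimal

variable {N : Type*} [Fintype N] [Fintype G] [DecidableEq G]

def IsNashOptimal (v : N → Finset G → ℚ) (A : N → Finset G) : Prop :=
  IsAllocation A ∧ ∀ A' : N → Finset G, IsAllocation A' → ∏ k, v k (A' k) ≤ ∏ k, v k (A k)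

variable {T : N → Finset G} {A : N → Finset G}

lemma IsNashOptimal.hardVal_pos [Nonempty N] (hA : IsNashOptimal (fun k => hardVal (T k)) A)
    (hcard : Fintype.card N ≤ Fintype.card G) (k : N) : 0 < hardVal (T k) (A k) := by
  obtain ⟨A₀, hA₀, hne⟩ := exists_isAllocation_forall_nonempty hcard
  have hprod : 0 < ∏ k, hardVal (T k) (A k) :=
    (prod_pos fun k _ => _root_.hardVal_pos (T k) (hne k)).trans_le (hA.2 A₀ hA₀)
  exact (hardVal_nonneg (T k) (A k)).lt_of_ne'
    (prod_ne_zero_iff.mp hprod.ne' k (mem_univ k))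

/-- Moving a good that `i` values at `4/5` to `j` must not raise the Nash product, which
bounds how far `i`'s value can exceed `j`'s. -/
lemma IsNashOptimal.hardVal_sub_hardVal_le [DecidableEq N]
    (hA : IsNashOptimal (fun k => hardVal (T k)) A) (hpos : ∀ k, 0 < hardVal (T k) (A k))
    {i j : N} (hij : i ≠ j) {g : G} (hg : g ∈ A i \ T i) :
    hardVal (T i) (A i) - hardVal (T j) (A j) ≤ 4 / 5 := by
  obtain ⟨hgA, hgT⟩ := mem_sdiff.mp hg
  have hgj : g ∉ A j := disjoint_left.mp (hA.1.disjoint hij) hgA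
  have hle := hA.2 _ (isAllocation_moveGood hA.1 hij hgA)
  have hrest : ∏ k ∈ {i, j}ᶜ, hardVal (T k) (moveGood A g i j k)
      = ∏ k ∈ {i, j}ᶜ, hardVal (T k) (A k) := by
    refine prod_congr rfl fun k hk => ?_
    simp only [mem_compl, mem_insert, mem_singleton, not_or] at hk
    rw [moveGood_apply_of_ne hk.1 hk.2]
  rw [prod_eq_mul_mul_prod_compl_pair _ hij, prod_eq_mul_mul_prod_compl_pair _ hij,
    moveGood_apply_left hij, moveGood_apply_right, hrest] at hle
  have hP : 0 < ∏ k ∈ {i, j}ᶜ, hardVal (T k) (A k) := prod_pos fun k _ => hpos k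
  have hi := hardVal_erase (T i) hgA hgT
  have hi₀ := hardVal_nonneg (T i) ((A i).erase g)
  have hj := hardVal_add_le_hardVal_insert (T j) hgj
  have hmoved := le_of_mul_le_mul_right hle hP
  nlinarith

end NashOptimal

theorem stmt16_general [Fintype G] [DecidableEq G] (n e : ℕ)
    (V D : Finset G) (hVD : Disjoint V D) (hcover : V ∪ D = (Finset.univ : Finset G))
    (hV : V.card = 4 * n) (hD : D.card = 5 * (2 * n + e))
    (T : Fin (3 * n) → Finset G) (hT : ∀ i, T i ⊆ V ∧ (T i).card = 4)
    (he : 20 * e < 3 * n)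
    (A : Fin (3 * n) → Finset G) (hA : IsAllocation A)
    (hopt : ∀ A' : Fin (3 * n) → Finset G, IsAllocation A' →
      ∏ i, hardVal (T i) (A' i) ≤ ∏ i, hardVal (T i) (A i)) :
    ∀ i : Fin (3 * n), hardVal (T i) (A i) ≤ 24 / 5 := by
  intro i
  have hNash : IsNashOptimal (fun k => hardVal (T k)) A := ⟨hA, hopt⟩
  have hcardG : Fintype.card G = 14 * n + 5 * e := by
    rw [← card_univ, ← hcover, card_union_of_disjoint hVD, hV, hD]
    ring
  have : Nonempty (Fin (3 * n)) := ⟨i⟩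
  have hpos := hNash.hardVal_pos (by rw [Fintype.card_fin, hcardG]; omega)
  obtain ⟨j, -, hj⟩ : ∃ j ∈ univ, (A j).card < 5 := by
    refine exists_lt_of_sum_lt ?_
    rw [hA.sum_card_s16, sum_const, card_univ, Fintype.card_fin, hcardG, smul_eq_mul]
    omega
  by_contra! hbig
  have hj₄ : hardVal (T j) (A j) ≤ 4 :=
    (hardVal_le_card _ _).trans (by exact_mod_cast Nat.lt_succ_iff.mp hj)
  obtain ⟨g, hg⟩ := sdiff_nonempty_of_card_lt_hardVal (T i) (A := A i)
    (by rw [(hT i).2]; push_cast; linarith)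
  have hij : i ≠ j := by
    rintro rfl
    linarith
  linarith [hNash.hardVal_sub_hardVal_le hpos hij hg]

/-- Lemma 5.4: in the hardness instance (with `20e < 3n`), in a Nash-optimal
allocation every agent has valuation at most `4.8 = 24/5`. -/
theorem stmt16 [Fintype G] [DecidableEq G] (n e : ℕ) (hn : 1 ≤ n)
    (V D : Finset G) (hVD : Disjoint V D) (hcover : V ∪ D = (Finset.univ : Finset G))
    (hV : V.card = 4 * n) (hD : D.card = 5 * (2 * n + e))
    (T : Fin (3 * n) → Finset G) (hT : ∀ i, T i ⊆ V ∧ (T i).card = 4)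
    (he : 20 * e < 3 * n)
    (A : Fin (3 * n) → Finset G) (hA : IsAllocation A)
    (hopt : ∀ A' : Fin (3 * n) → Finset G, IsAllocation A' →
      ∏ i, hardVal (T i) (A' i) ≤ ∏ i, hardVal (T i) (A i)) :
    ∀ i : Fin (3 * n), hardVal (T i) (A i) ≤ 24 / 5 :=
  stmt16_general n e V D hVD hcover hV hD T hT he A hA hopt
end

section
/- In the hardness instance, suppose e ≤ n and there exists a set M of agents with |M| = n − e such that the sets T_i for i ∈ M are pairwise disjoint (a matching of size n − e). Then there exists an allocation A with v_i(A_i) ≥ 4 for every agent i; in particular the Nash product satisfies ∏_i v_i(A_i) ≥ 4^{3n}. -/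
open Finset

variable {G : Type*}

/-
Give each matched agent its own set `T i`, worth 4 to it. The `2n + e` unmatched agents share
the remaining `10n + 9e` goods so that each receives at least five; since every good is worth
at least `4/5` to every agent, each of them also gets value at least 4.
-/

theorem Finset.exists_pairwiseDisjoint_biUnion_eq_of_mul_card_le {ι α : Type*} [DecidableEq ι]
    [DecidableEq α] (k : ℕ) {I : Finset ι} (hI : I.Nonempty) {R : Finset α} (hR : k * #I ≤ #R) :
    ∃ B : ι → Finset α,
      (I : Set ι).PairwiseDisjoint B ∧ I.biUnion B = R ∧ ∀ i ∈ I, k ≤ #(B i) := by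
  induction hI using Finset.Nonempty.cons_induction generalizing R with
  | singleton a => exact ⟨fun _ => R, by simp, by simp, by simpa using hR⟩
  | cons a s ha _ ih =>
    rw [card_cons, mul_add, mul_one] at hR
    obtain ⟨R₀, hR₀R, hR₀⟩ := exists_subset_card_eq (show k ≤ #R by omega)
    obtain ⟨B, hBdisj, hBunion, hBcard⟩ :=
      ih (R := R \ R₀) (by rw [card_sdiff_of_subset hR₀R]; omega)
    have hupdate : ∀ i ∈ s, Function.update B a R₀ i = B i := fun i hi =>
      Function.update_of_ne (ne_of_mem_of_not_mem hi ha) _ _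
    refine ⟨Function.update B a R₀, ?_, ?_, ?_⟩
    · rw [coe_cons, Set.pairwiseDisjoint_insert_of_notMem (mem_coe.not.mpr ha)]
      refine ⟨hBdisj.mono_on fun i hi => (hupdate i hi).le, fun j hj => ?_⟩
      rw [Function.update_self, hupdate j hj]
      exact disjoint_sdiff.mono_right (hBunion ▸ subset_biUnion_of_mem B hj)
    · rw [cons_eq_insert, biUnion_insert, Function.update_self, biUnion_congr rfl hupdate,
        hBunion, union_sdiff_of_subset hR₀R]
    · rw [forall_mem_cons, Function.update_self, hR₀]
      exact ⟨le_rfl, fun i hi => hupdate i hi ▸ hBcard i hi⟩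

section HardnessInstance

variable [DecidableEq G]

theorem hardVal_self (T : Finset G) : hardVal T T = #T := by
  simp [hardVal]

theorem four_fifths_mul_card_le_hardVal (T A : Finset G) : 4 / 5 * (#A : ℚ) ≤ hardVal T A := by
  rw [hardVal, ← card_inter_add_card_sdiff A T]
  push_cast
  linarith [(#(A ∩ T)).cast_nonneg (α := ℚ)]

theorem isAllocation_piecewise {N : Type*} [Fintype N] [DecidableEq N] [Fintype G]
    {M : Finset N} {T B : N → Finset G} (hT : (M : Set N).PairwiseDisjoint T)
    (hB : ((Mᶜ : Finset N) : Set N).PairwiseDisjoint B) (hunion : Mᶜ.biUnion B = (M.biUnion T)ᶜ) :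
    IsAllocation (M.piecewise T B) := by
  have hsplit : (univ : Finset N) = M ∪ Mᶜ := (union_compl M).symm
  refine ⟨?_, ?_⟩
  · rw [← coe_univ, hsplit, coe_union]
    refine (hT.mono_on fun i hi => (piecewise_eq_of_mem _ _ _ hi).le).union
      (hB.mono_on fun i hi => (piecewise_eq_of_notMem _ _ _ (mem_compl.mp hi)).le) ?_
    intro i hi j hj _
    rw [piecewise_eq_of_mem _ _ _ hi, piecewise_eq_of_notMem _ _ _ (mem_compl.mp hj)]
    exact disjoint_compl_right.mono (subset_biUnion_of_mem T hi)
      (hunion ▸ subset_biUnion_of_mem B hj)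
  · rw [hsplit, union_biUnion,
      biUnion_congr rfl fun i hi => piecewise_eq_of_mem M T B hi,
      biUnion_congr rfl fun i hi => piecewise_eq_of_notMem M T B (mem_compl.mp hi),
      hunion, union_compl]

end HardnessInstance

theorem stmt17_general [Fintype G] [DecidableEq G] (n e : ℕ) (hn : 1 ≤ n)
    (V D : Finset G) (hVD : Disjoint V D) (hcover : V ∪ D = (Finset.univ : Finset G))
    (hV : V.card = 4 * n) (hD : D.card = 5 * (2 * n + e))
    (T : Fin (3 * n) → Finset G) (hT : ∀ i, T i ⊆ V ∧ (T i).card = 4)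
    (M : Finset (Fin (3 * n))) (hM : M.card = n - e)
    (hmatch : (M : Set (Fin (3 * n))).PairwiseDisjoint T) :
    ∃ A : Fin (3 * n) → Finset G, IsAllocation A ∧
      (∀ i : Fin (3 * n), 4 ≤ hardVal (T i) (A i)) ∧
      (4 : ℚ) ^ (3 * n) ≤ ∏ i, hardVal (T i) (A i) := by
  have hmatched : #(M.biUnion T) = 4 * (n - e) := by
    rw [card_biUnion hmatch, sum_congr rfl fun i _ => (hT i).2, sum_const, hM, smul_eq_mul,
      mul_comm]
  have hgoods : #(univ : Finset G) = 14 * n + 5 * e := by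
    rw [← hcover, card_union_of_disjoint hVD, hV, hD]
    ring
  have hunmatched : #Mᶜ = 3 * n - (n - e) := by
    rw [card_compl, Fintype.card_fin, hM]
  obtain ⟨B, hBdisj, hBunion, hBcard⟩ :=
    exists_pairwiseDisjoint_biUnion_eq_of_mul_card_le 5 (I := Mᶜ) (card_pos.mp (by omega))
      (R := (M.biUnion T)ᶜ) (by rw [hunmatched, card_compl, ← card_univ, hgoods, hmatched]; omega)
  have hval : ∀ i, 4 ≤ hardVal (T i) (M.piecewise T B i) := by
    intro i
    by_cases hi : i ∈ M
    · simp [piecewise_eq_of_mem _ _ _ hi, hardVal_self, (hT i).2]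
    · rw [piecewise_eq_of_notMem _ _ _ hi]
      have h5 : (5 : ℚ) ≤ #(B i) := by exact_mod_cast hBcard i (mem_compl.mpr hi)
      linarith [four_fifths_mul_card_le_hardVal (T i) (B i)]
  refine ⟨M.piecewise T B, isAllocation_piecewise hmatch hBdisj hBunion, hval, ?_⟩
  calc (4 : ℚ) ^ (3 * n) = ∏ _i : Fin (3 * n), (4 : ℚ) := by simp
    _ ≤ _ := prod_le_prod (fun _ _ => by norm_num) fun i _ => hval i

/-- Completeness: if there is a matching of size `n − e` (with `e ≤ n`), then there is
an allocation giving every agent valuation at least 4; in particular the Nash product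
is at least `4 ^ (3n)`. -/
theorem stmt17 [Fintype G] [DecidableEq G] (n e : ℕ) (hn : 1 ≤ n) (hen : e ≤ n)
    (V D : Finset G) (hVD : Disjoint V D) (hcover : V ∪ D = (Finset.univ : Finset G))
    (hV : V.card = 4 * n) (hD : D.card = 5 * (2 * n + e))
    (T : Fin (3 * n) → Finset G) (hT : ∀ i, T i ⊆ V ∧ (T i).card = 4)
    (M : Finset (Fin (3 * n))) (hM : M.card = n - e)
    (hmatch : (M : Set (Fin (3 * n))).PairwiseDisjoint T) :
    ∃ A : Fin (3 * n) → Finset G, IsAllocation A ∧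
      (∀ i : Fin (3 * n), 4 ≤ hardVal (T i) (A i)) ∧
      (4 : ℚ) ^ (3 * n) ≤ ∏ i, hardVal (T i) (A i) :=
  stmt17_general n e hn V D hVD hcover hV hD T hT M hM hmatch
end
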